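/- Let π be a compactly supported probability measure on ℝ with support contained in [l,1] for some 0 < l < 1, and let r > 0. For each z in the upper half plane ℂ₊ there is at most one m ∈ ℂ₊ satisfying 1/m = −z + r ∫ t/(1 + m t) dπ(t). -/

import Mathlib

open MeasureTheory Complex

/-!
Write `f_m(t) = t / (1 + m t)`. Since `1 / f_m(t) = 1 / t + m`, we have
`Im f_m = -Im m · |f_m|²`, so the imaginary part of the equation gives
`r ∫ |m f_m|² dπ = 1 - |m|² Im z / Im m < 1`. For two solutions `m₁ ≠ m₂`, subtracting the
equations and using `f_{m₁} - f_{m₂} = (m₂ - m₁) f_{m₁} f_{m₂}` gives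
`1 = r ∫ (m₁ f_{m₁}) (m₂ f_{m₂}) dπ`, which contradicts `|ab| ≤ (|a|² + |b|²) / 2`.
-/

section Kernel

variable {m : ℂ}

lemma one_add_mul_ofReal_ne_zero (hm : m.im ≠ 0) (t : ℝ) : 1 + m * t ≠ 0 := by
  intro h
  have him := congrArg im h
  simp only [add_im, one_im, mul_im, ofReal_re, ofReal_im, mul_zero, zero_add,
    zero_im] at him
  rcases mul_eq_zero.1 him with h | rfl
  · exact hm h
  · simp at h

lemma continuous_ofReal_div_one_add_mul (hm : m.im ≠ 0) :
    Continuous fun t : ℝ => (t : ℂ) / (1 + m * t) :=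
  (continuous_ofReal).div (by fun_prop) (one_add_mul_ofReal_ne_zero hm)

lemma norm_ofReal_div_one_add_mul_le (hm : m.im ≠ 0) (t : ℝ) :
    ‖(t : ℂ) / (1 + m * t)‖ ≤ |m.im|⁻¹ := by
  have hden : |m.im| * |t| ≤ ‖1 + m * t‖ := by
    simpa [abs_mul] using abs_im_le_norm (1 + m * t)
  rw [norm_div, norm_real, Real.norm_eq_abs,
    div_le_iff₀ (norm_pos_iff.2 (one_add_mul_ofReal_ne_zero hm t))]
  calc |t| = |m.im|⁻¹ * (|m.im| * |t|) := by field_simp [abs_pos.2 hm]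
    _ ≤ |m.im|⁻¹ * ‖1 + m * t‖ := by gcongr

lemma im_ofReal_div_one_add_mul (m : ℂ) (t : ℝ) :
    ((t : ℂ) / (1 + m * t)).im = -m.im * ‖(t : ℂ) / (1 + m * t)‖ ^ 2 := by
  rw [div_im, norm_div, div_pow, norm_real, Real.norm_eq_abs, sq_abs, ← normSq_eq_norm_sq]
  simp only [ofReal_re, ofReal_im, add_im, one_im, mul_im]
  ring

lemma ofReal_div_one_add_mul_sub {m₁ m₂ : ℂ} {t : ℝ} (h₁ : 1 + m₁ * t ≠ 0)
    (h₂ : 1 + m₂ * t ≠ 0) :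
    (t : ℂ) / (1 + m₁ * t) - t / (1 + m₂ * t)
      = (m₂ - m₁) * ((t / (1 + m₁ * t)) * (t / (1 + m₂ * t))) := by
  rw [div_sub_div _ _ h₁ h₂, div_mul_div_comm, mul_div_assoc']
  congr 1
  ring

end Kernel

lemma norm_integral_mul_le_half_add {α A : Type*} [MeasurableSpace α] {μ : Measure α}
    [NormedRing A] [NormedSpace ℝ A] {g₁ g₂ : α → A}
    (h₁ : Integrable (fun x => ‖g₁ x‖ ^ 2) μ) (h₂ : Integrable (fun x => ‖g₂ x‖ ^ 2) μ) :
    ‖∫ x, g₁ x * g₂ x ∂μ‖ ≤ (∫ x, ‖g₁ x‖ ^ 2 ∂μ + ∫ x, ‖g₂ x‖ ^ 2 ∂μ) / 2 := by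
  have hpt (x : α) : ‖g₁ x * g₂ x‖ ≤ (‖g₁ x‖ ^ 2 + ‖g₂ x‖ ^ 2) / 2 := by
    have := two_mul_le_add_sq ‖g₁ x‖ ‖g₂ x‖
    linarith [norm_mul_le (g₁ x) (g₂ x)]
  calc ‖∫ x, g₁ x * g₂ x ∂μ‖ ≤ ∫ x, ‖g₁ x * g₂ x‖ ∂μ := norm_integral_le_integral_norm _
    _ ≤ ∫ x, (‖g₁ x‖ ^ 2 + ‖g₂ x‖ ^ 2) / 2 ∂μ :=
      integral_mono_of_nonneg (ae_of_all _ fun _ => norm_nonneg _) ((h₁.add h₂).div_const 2)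
        (ae_of_all _ hpt)
    _ = _ := by rw [integral_div, integral_add h₁ h₂]

section FiniteMeasure

variable {μ : Measure ℝ} [IsFiniteMeasure μ] {m : ℂ}

lemma integrable_ofReal_div_one_add_mul (hm : m.im ≠ 0) :
    Integrable (fun t : ℝ => (t : ℂ) / (1 + m * t)) μ :=
  .of_bound (continuous_ofReal_div_one_add_mul hm).aestronglyMeasurable _
    (ae_of_all _ (norm_ofReal_div_one_add_mul_le hm))

lemma integrable_norm_mul_ofReal_div_one_add_mul_sq (hm : m.im ≠ 0) :
    Integrable (fun t : ℝ => ‖m * (t / (1 + m * t))‖ ^ 2) μ := by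
  have hc := continuous_ofReal_div_one_add_mul hm
  refine .of_bound (Continuous.aestronglyMeasurable (by fun_prop)) ((‖m‖ * |m.im|⁻¹) ^ 2) (ae_of_all _ fun t => ?_)
  rw [norm_pow, norm_norm, norm_mul]
  gcongr
  exact norm_ofReal_div_one_add_mul_le hm t

lemma mul_integral_norm_mul_ofReal_div_one_add_mul_sq_lt_one {r : ℝ} {z : ℂ} (hz : 0 < z.im)
    (hm : 0 < m.im) (he : 1 / m = -z + r * ∫ t, (t : ℂ) / (1 + m * t) ∂μ) :
    r * ∫ t, ‖m * (t / (1 + m * t))‖ ^ 2 ∂μ < 1 := by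
  set J := ∫ t, ‖(t : ℂ) / (1 + m * t)‖ ^ 2 ∂μ
  have hIm : (∫ t, (t : ℂ) / (1 + m * t) ∂μ).im = -m.im * J := by
    have := integral_im (𝕜 := ℂ) (integrable_ofReal_div_one_add_mul (μ := μ) hm.ne')
    simp only [RCLike.im_to_complex, im_ofReal_div_one_add_mul] at this
    rw [← this, integral_const_mul]
  have hsq : ∫ t, ‖m * (t / (1 + m * t))‖ ^ 2 ∂μ = ‖m‖ ^ 2 * J := by
    simp_rw [norm_mul, mul_pow]
    exact integral_const_mul _ _
  have heIm := congrArg im he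
  rw [one_div, inv_im, normSq_eq_norm_sq, add_im, neg_im, im_ofReal_mul, hIm] at heIm
  have hN : 0 < ‖m‖ ^ 2 := by
    have : m ≠ 0 := fun h => by simp [h] at hm
    positivity
  have hscaled : m.im * (r * (‖m‖ ^ 2 * J)) = m.im - ‖m‖ ^ 2 * z.im := by
    have := congrArg (· * ‖m‖ ^ 2) heIm
    simp only [neg_mul, div_mul_cancel₀ _ hN.ne'] at this
    linarith
  rw [hsq]
  refine lt_of_mul_lt_mul_left ?_ hm.le
  linarith [mul_pos hN hz]

end FiniteMeasure

lemma one_eq_mul_integral_mul_of_ne {μ : Measure ℝ} [IsFiniteMeasure μ] {r : ℝ} {z m₁ m₂ : ℂ}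
    (hm₁ : m₁.im ≠ 0) (hm₂ : m₂.im ≠ 0) (hne : m₁ ≠ m₂)
    (he₁ : 1 / m₁ = -z + r * ∫ t, (t : ℂ) / (1 + m₁ * t) ∂μ)
    (he₂ : 1 / m₂ = -z + r * ∫ t, (t : ℂ) / (1 + m₂ * t) ∂μ) :
    (1 : ℂ) = r * ∫ t, m₁ * (t / (1 + m₁ * t)) * (m₂ * (t / (1 + m₂ * t))) ∂μ := by
  set K := ∫ t, (t : ℂ) / (1 + m₁ * t) * (t / (1 + m₂ * t)) ∂μ
  have hsub : (∫ t, (t : ℂ) / (1 + m₁ * t) ∂μ) - ∫ t, (t : ℂ) / (1 + m₂ * t) ∂μ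
      = (m₂ - m₁) * K := by
    rw [← integral_sub (integrable_ofReal_div_one_add_mul hm₁)
      (integrable_ofReal_div_one_add_mul hm₂), ← integral_const_mul]
    congr 1 with t
    exact ofReal_div_one_add_mul_sub (one_add_mul_ofReal_ne_zero hm₁ t)
      (one_add_mul_ofReal_ne_zero hm₂ t)
  have hm₁0 : m₁ ≠ 0 := fun h => hm₁ (by simp [h])
  have hm₂0 : m₂ ≠ 0 := fun h => hm₂ (by simp [h])
  have hK : 1 / (m₁ * m₂) = r * K := by
    refine mul_left_cancel₀ (sub_ne_zero.2 hne.symm) ?_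
    have hdiff : 1 / m₁ - 1 / m₂ = (m₂ - m₁) / (m₁ * m₂) := by field_simp
    linear_combination hdiff.symm + he₁ - he₂ + r * hsub
  calc (1 : ℂ) = m₁ * m₂ * (1 / (m₁ * m₂)) := by field_simp
    _ = r * ∫ t, m₁ * m₂ * ((t : ℂ) / (1 + m₁ * t) * (t / (1 + m₂ * t))) ∂μ := by
      rw [hK, integral_const_mul]; ring
    _ = _ := by congr 2 with t; ring

theorem self_consistent_eq_unique_solution_general
    (π : Measure ℝ) [IsProbabilityMeasure π]
    (r : ℝ) (hr : 0 < r) (z : ℂ) (hz : 0 < z.im)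
    (m₁ m₂ : ℂ) (hm₁ : 0 < m₁.im) (hm₂ : 0 < m₂.im)
    (he₁ : 1 / m₁ = -z + (r : ℂ) * ∫ t, (t : ℂ) / (1 + m₁ * (t : ℂ)) ∂π)
    (he₂ : 1 / m₂ = -z + (r : ℂ) * ∫ t, (t : ℂ) / (1 + m₂ * (t : ℂ)) ∂π) :
    m₁ = m₂ := by
  by_contra hne
  have hone := congrArg norm (one_eq_mul_integral_mul_of_ne hm₁.ne' hm₂.ne' hne he₁ he₂)
  rw [norm_one, norm_mul, norm_real, Real.norm_eq_abs, abs_of_pos hr] at hone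
  have hle := norm_integral_mul_le_half_add (μ := π)
    (integrable_norm_mul_ofReal_div_one_add_mul_sq hm₁.ne')
    (integrable_norm_mul_ofReal_div_one_add_mul_sq hm₂.ne')
  have hlt₁ := mul_integral_norm_mul_ofReal_div_one_add_mul_sq_lt_one hz hm₁ he₁
  have hlt₂ := mul_integral_norm_mul_ofReal_div_one_add_mul_sq_lt_one hz hm₂ he₂
  have := mul_le_mul_of_nonneg_left hle hr.le
  linarith

/-- For a probability measure `π` supported in `[l,1]` (`0 < l < 1`), `r > 0`, and `z`
in the upper half plane, there is at most one `m` in the upper half plane satisfying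
the self-consistent equation `1/m = -z + r ∫ t/(1 + m t) dπ(t)`. -/
theorem self_consistent_eq_unique_solution
    (l : ℝ) (hl : 0 < l) (hl1 : l < 1)
    (π : Measure ℝ) [IsProbabilityMeasure π] (hsupp : π (Set.Icc l 1)ᶜ = 0)
    (r : ℝ) (hr : 0 < r) (z : ℂ) (hz : 0 < z.im)
    (m₁ m₂ : ℂ) (hm₁ : 0 < m₁.im) (hm₂ : 0 < m₂.im)
    (he₁ : 1 / m₁ = -z + (r : ℂ) * ∫ t, (t : ℂ) / (1 + m₁ * (t : ℂ)) ∂π)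
    (he₂ : 1 / m₂ = -z + (r : ℂ) * ∫ t, (t : ℂ) / (1 + m₂ * (t : ℂ)) ∂π) :
    m₁ = m₂ :=
  self_consistent_eq_unique_solution_general π r hr z hz m₁ m₂ hm₁ hm₂ he₁ he₂
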